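/- Let Γ₃ be the biderivation on ℝ[θ₁,θ₂] with Γ₃(θ₁,θ₁) = 4θ₁(1−θ₁), Γ₃(θ₁,θ₂) = −2nθ₁θ₂, Γ₃(θ₂,θ₂) = n²((1−θ₁)^{n−1} − θ₂²). Then Γ₃(θ₁,θ₁) = θ₁·(4(1−θ₁)), Γ₃(θ₂,θ₁) = θ₁·(−2nθ₂), and for P₁ = (1−θ₁)ⁿ − θ₂²: Γ₃(θ₁,P₁) = −4nθ₁P₁ and Γ₃(θ₂,P₁) = −2n²θ₂P₁. -/

import Mathlib

open MvPolynomial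

/-- At `n = 0` the factor `n` absorbs the truncated exponent `0 - 1 = 0`. -/
theorem natCast_mul_pow_sub_one_mul {R : Type*} [CommSemiring R] (n : ℕ) (a : R) :
    (n : R) * a ^ (n - 1) * a = n * a ^ n := by
  rcases n with _ | n
  · simp
  · rw [Nat.add_sub_cancel, mul_assoc, ← pow_succ]

section PDeriv

variable {R σ : Type*} [CommRing R] {i j : σ}

theorem pderiv_one_sub_X_pow_sub_X_sq_left (hij : i ≠ j) (n : ℕ) :
    pderiv i ((1 - X i) ^ n - X j ^ 2 : MvPolynomial σ R) =
      -((n : MvPolynomial σ R) * (1 - X i) ^ (n - 1)) := by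
  simp [Derivation.leibniz_pow, pderiv_X_of_ne hij.symm]

theorem pderiv_one_sub_X_pow_sub_X_sq_right (hij : i ≠ j) (n : ℕ) :
    pderiv j ((1 - X i) ^ n - X j ^ 2 : MvPolynomial σ R) = -(2 * X j) := by
  simp [Derivation.leibniz_pow, pderiv_X_of_ne hij]

end PDeriv

theorem stmt7_general (n : ℕ) :
    let θ₁ : MvPolynomial (Fin 2) ℝ := X 0
    let θ₂ : MvPolynomial (Fin 2) ℝ := X 1
    let N : MvPolynomial (Fin 2) ℝ := (n : MvPolynomial (Fin 2) ℝ)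
    let g11 := 4 * θ₁ * (1 - θ₁)
    let g12 := -2 * N * θ₁ * θ₂
    let g22 := N ^ 2 * ((1 - θ₁) ^ (n - 1) - θ₂ ^ 2)
    let P₁ : MvPolynomial (Fin 2) ℝ := (1 - θ₁) ^ n - θ₂ ^ 2
    g11 = θ₁ * (4 * (1 - θ₁)) ∧
    g12 = θ₁ * (-2 * N * θ₂) ∧
    g11 * pderiv 0 P₁ + g12 * pderiv 1 P₁ = -4 * N * θ₁ * P₁ ∧
    g12 * pderiv 0 P₁ + g22 * pderiv 1 P₁ = -2 * N ^ 2 * θ₂ * P₁ := by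
  intro θ₁ θ₂ N g11 g12 g22 P₁
  have h01 : (0 : Fin 2) ≠ 1 := by decide
  have hP₁₀ : pderiv 0 P₁ = -(N * (1 - θ₁) ^ (n - 1)) :=
    pderiv_one_sub_X_pow_sub_X_sq_left h01 n
  have hP₁₁ : pderiv 1 P₁ = -(2 * θ₂) := pderiv_one_sub_X_pow_sub_X_sq_right h01 n
  have hpow : N * (1 - θ₁) ^ (n - 1) * (1 - θ₁) = N * (1 - θ₁) ^ n :=
    natCast_mul_pow_sub_one_mul n (1 - θ₁)
  rw [hP₁₀, hP₁₁]
  refine ⟨by ring, by ring, ?_, ?_⟩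
  · linear_combination -4 * θ₁ * hpow
  · linear_combination -2 * N * θ₂ * hpow

/-- For the biderivation `Γ₃` on `ℝ[θ₁,θ₂]` determined by its values on generators,
the chain rule gives `Γ₃(θᵢ, P) = ∑ⱼ Γ₃(θᵢ,θⱼ) ∂ⱼP`. -/
theorem stmt7 (n : ℕ) (hn : 1 ≤ n) :
    let θ₁ : MvPolynomial (Fin 2) ℝ := X 0
    let θ₂ : MvPolynomial (Fin 2) ℝ := X 1
    let N : MvPolynomial (Fin 2) ℝ := (n : MvPolynomial (Fin 2) ℝ)
    let g11 := 4 * θ₁ * (1 - θ₁)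
    let g12 := -2 * N * θ₁ * θ₂
    let g22 := N ^ 2 * ((1 - θ₁) ^ (n - 1) - θ₂ ^ 2)
    let P₁ : MvPolynomial (Fin 2) ℝ := (1 - θ₁) ^ n - θ₂ ^ 2
    g11 = θ₁ * (4 * (1 - θ₁)) ∧
    g12 = θ₁ * (-2 * N * θ₂) ∧
    g11 * pderiv 0 P₁ + g12 * pderiv 1 P₁ = -4 * N * θ₁ * P₁ ∧
    g12 * pderiv 0 P₁ + g22 * pderiv 1 P₁ = -2 * N ^ 2 * θ₂ * P₁ :=
  stmt7_general n
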